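/- arXiv:2412.03366 — 2 statements merged into one kernel-verified Lean document; each statement's English description precedes it below -/
import Mathlib

section
/- Fix α ∈ [0,1] and H ∈ (0,1), and set H⁺ = (1+α)H and H⁻ = (1−α)H. Define φ(ξ₁,ξ₂) = min(|ξ₁|,|ξ₂|)^{H⁻+1/2} · max(|ξ₁|,|ξ₂|)^{H⁺+1/2}. Then for any fixed (x₁,x₂) ∈ ℝ², the kernel K(ξ₁,ξ₂) = (e^{i x₁ ξ₁} − 1)(e^{i x₂ ξ₂} − 1)/φ(ξ₁,ξ₂) belongs to L²(ℝ²). -/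
/-!
If `a ≤ b` and `a + b = 2s`, then `min(|ξ₁|,|ξ₂|)^a · max(|ξ₁|,|ξ₂|)^b ≥ |ξ₁|^s |ξ₂|^s`. With
`s = H + 1/2` the kernel is therefore dominated by the tensor product `k_{x₁}(ξ₁) k_{x₂}(ξ₂)` of the
one-dimensional kernels `k_c(ξ) = (e^{icξ} - 1) / |ξ|^s`, and each `k_c` lies in `L²(ℝ)` because
`|k_c(ξ)|² ≤ min(4, c²ξ²) |ξ|^{-(2H+1)}`, which is integrable at `0` as `H < 1` and at infinity as
`H > 0`.
-/

open MeasureTheory Real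

lemma Complex.norm_exp_I_mul_ofReal_sub_one_le_min (x : ℝ) :
    ‖Complex.exp (Complex.I * x) - 1‖ ≤ min 2 |x| := by
  refine le_min ?_ (by simpa using Real.norm_exp_I_mul_ofReal_sub_one_le (x := x))
  rw [Complex.norm_exp_I_mul_ofReal_sub_one, norm_mul, Real.norm_ofNat, Real.norm_eq_abs]
  linarith [abs_sin_le_one (x / 2)]

lemma integrable_of_even_of_integrableOn_Ioi {E : Type*} [NormedAddCommGroup E] {f : ℝ → E}
    (heven : ∀ x, f (-x) = f x) (hf : IntegrableOn f (Set.Ioi 0)) : Integrable f := by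
  rw [← integrableOn_univ, ← Set.Iio_union_Ici (a := (0 : ℝ)), integrableOn_union,
    integrableOn_Ici_iff_integrableOn_Ioi]
  refine ⟨?_, hf⟩
  rw [← (Measure.measurePreserving_neg (volume : Measure ℝ)).integrableOn_comp_preimage
      (Homeomorph.neg ℝ).measurableEmbedding]
  simpa [Function.comp_def, heven] using hf

lemma integrable_min_mul_sq_mul_abs_rpow_neg {A B p : ℝ} (hA : 0 ≤ A) (hB : 0 ≤ B)
    (hp₁ : 1 < p) (hp₃ : p < 3) :
    Integrable (fun ξ : ℝ => min A (B * ξ ^ 2) * |ξ| ^ (-p)) := by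
  have hmeas : AEStronglyMeasurable (fun ξ : ℝ => min A (B * ξ ^ 2) * |ξ| ^ (-p)) := by
    fun_prop
  refine integrable_of_even_of_integrableOn_Ioi (fun ξ => by simp) ?_
  rw [← Set.Ioc_union_Ioi_eq_Ioi zero_le_one, integrableOn_union]
  constructor
  · have hdom : IntegrableOn (fun ξ : ℝ => B * ξ ^ (2 - p)) (Set.Ioc 0 1) :=
      (intervalIntegral.intervalIntegrable_rpow' (a := 0) (b := 1) (by linarith)).1.const_mul B
    refine hdom.mono' hmeas.restrict (ae_restrict_of_forall_mem measurableSet_Ioc fun ξ hξ => ?_)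
    have hξ₀ : 0 < ξ := hξ.1
    rw [Real.norm_of_nonneg (by positivity), abs_of_pos hξ₀, Real.rpow_sub hξ₀,
      Real.rpow_neg hξ₀.le, Real.rpow_two, mul_div_assoc', div_eq_mul_inv]
    gcongr
    exact min_le_right _ _
  · have hdom : IntegrableOn (fun ξ : ℝ => A * ξ ^ (-p)) (Set.Ioi 1) :=
      (integrableOn_Ioi_rpow_of_lt (by linarith) zero_lt_one).const_mul A
    refine hdom.mono' hmeas.restrict (ae_restrict_of_forall_mem measurableSet_Ioi fun ξ hξ => ?_)
    have hξ₀ : (0 : ℝ) < ξ := zero_lt_one.trans hξ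
    rw [Real.norm_of_nonneg (by positivity), abs_of_pos hξ₀]
    gcongr
    exact min_le_left _ _

lemma memLp_two_exp_I_mul_sub_one_div_abs_rpow (c : ℝ) {s : ℝ} (hs₀ : 1 / 2 < s) (hs₁ : s < 3 / 2) :
    MemLp (fun ξ : ℝ => (Complex.exp (Complex.I * (c * ξ)) - 1) / ((|ξ| ^ s : ℝ) : ℂ)) 2 := by
  have hmeas : AEStronglyMeasurable
      (fun ξ : ℝ => (Complex.exp (Complex.I * (c * ξ)) - 1) / ((|ξ| ^ s : ℝ) : ℂ)) :=
    Measurable.aestronglyMeasurable (by fun_prop)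
  rw [memLp_two_iff_integrable_sq_norm hmeas]
  refine (integrable_min_mul_sq_mul_abs_rpow_neg (A := 4) (B := c ^ 2) (p := 2 * s) (by norm_num)
    (sq_nonneg c) (by linarith) (by linarith)).mono' (hmeas.norm.pow 2) (ae_of_all _ fun ξ => ?_)
  have hnum : ‖Complex.exp (Complex.I * (c * ξ)) - 1‖ ^ 2 ≤ min 4 (c ^ 2 * ξ ^ 2) := by
    have h := Complex.norm_exp_I_mul_ofReal_sub_one_le_min (c * ξ)
    push_cast at h
    refine le_min ?_ ?_
    · nlinarith [min_le_left 2 |c * ξ|, norm_nonneg (Complex.exp (Complex.I * (c * ξ)) - 1)]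
    · rw [← mul_pow, ← sq_abs (c * ξ)]
      exact pow_le_pow_left₀ (norm_nonneg _) (h.trans (min_le_right _ _)) 2
  rw [Real.norm_of_nonneg (by positivity), norm_div, Complex.norm_real, Real.norm_of_nonneg
    (by positivity), div_pow, ← Real.rpow_mul_natCast (abs_nonneg _), div_eq_mul_inv,
    ← Real.rpow_neg (abs_nonneg _)]
  push_cast
  rw [mul_comm s]
  gcongr

lemma MemLp.mul_prod {X Y 𝕜 : Type*} [MeasurableSpace X] [MeasurableSpace Y]
    [NormedDivisionRing 𝕜] {μ : Measure X} {ν : Measure Y} [SFinite ν] {f : X → 𝕜} {g : Y → 𝕜}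
    (hf : MemLp f 2 μ) (hg : MemLp g 2 ν) :
    MemLp (fun z : X × Y => f z.1 * g z.2) 2 (μ.prod ν) := by
  have hmeas : AEStronglyMeasurable (fun z : X × Y => f z.1 * g z.2) (μ.prod ν) :=
    hf.1.comp_fst.mul hg.1.comp_snd
  rw [memLp_two_iff_integrable_sq_norm hmeas]
  simpa only [norm_mul, mul_pow] using
    ((memLp_two_iff_integrable_sq_norm hf.1).1 hf).mul_prod
      ((memLp_two_iff_integrable_sq_norm hg.1).1 hg)

lemma rpow_mul_rpow_le_min_rpow_mul_max_rpow {x y a b s : ℝ} (hx : 0 < x) (hy : 0 < y)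
    (hab : a ≤ b) (hs : a + b = 2 * s) :
    x ^ s * y ^ s ≤ min x y ^ a * max x y ^ b := by
  set m := min x y
  set M := max x y
  have hm : 0 < m := lt_min hx hy
  have hmM : m ≤ M := min_le_max
  calc x ^ s * y ^ s = m ^ a * (m ^ (s - a) * M ^ s) := by
        rw [← Real.mul_rpow hx.le hy.le, ← min_mul_max, Real.mul_rpow hm.le (hm.trans_le hmM).le,
          ← mul_assoc, ← Real.rpow_add hm, add_sub_cancel]
    _ ≤ m ^ a * (M ^ (s - a) * M ^ s) := by gcongr; linarith
    _ = m ^ a * M ^ b := by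
        rw [← Real.rpow_add (hm.trans_le hmM)]
        congr 2
        linarith

lemma norm_mul_div_min_rpow_mul_max_rpow_le {x y a b s : ℝ} {u v : ℂ}
    (hu : x = 0 → u = 0) (hv : y = 0 → v = 0) (hab : a ≤ b) (hs : a + b = 2 * s) :
    ‖u * v / ((min |x| |y| ^ a * max |x| |y| ^ b : ℝ) : ℂ)‖ ≤
      ‖u / ((|x| ^ s : ℝ) : ℂ)‖ * ‖v / ((|y| ^ s : ℝ) : ℂ)‖ := by
  rcases eq_or_ne x 0 with rfl | hx
  · simp [hu rfl]
  rcases eq_or_ne y 0 with rfl | hy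
  · simp [hv rfl]
  have hx' : 0 < |x| := abs_pos.2 hx
  have hy' : 0 < |y| := abs_pos.2 hy
  have hφ : |x| ^ s * |y| ^ s ≤ min |x| |y| ^ a * max |x| |y| ^ b :=
    rpow_mul_rpow_le_min_rpow_mul_max_rpow hx' hy' hab hs
  rw [norm_div, norm_div, norm_div, norm_mul, Complex.norm_real, Complex.norm_real,
    Complex.norm_real, Real.norm_of_nonneg (by positivity), Real.norm_of_nonneg (by positivity),
    Real.norm_of_nonneg (by positivity), div_mul_div_comm]
  exact div_le_div_of_nonneg_left (by positivity) (by positivity) hφ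

theorem kernel_memL2 (α H : ℝ) (hα : α ∈ Set.Icc (0:ℝ) 1) (hH : H ∈ Set.Ioo (0:ℝ) 1)
    (x₁ x₂ : ℝ) :
    MemLp (fun ξ : ℝ × ℝ =>
        (Complex.exp (Complex.I * (x₁ * ξ.1)) - 1) * (Complex.exp (Complex.I * (x₂ * ξ.2)) - 1) /
          ((min |ξ.1| |ξ.2| ^ ((1 - α) * H + 1 / 2) *
            max |ξ.1| |ξ.2| ^ ((1 + α) * H + 1 / 2) : ℝ) : ℂ))
      2 (volume : Measure (ℝ × ℝ)) := by
  obtain ⟨hα₀, -⟩ := hα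
  obtain ⟨hH₀, hH₁⟩ := hH
  have hL2 (c : ℝ) := memLp_two_exp_I_mul_sub_one_div_abs_rpow c (s := H + 1 / 2)
    (by linarith) (by linarith)
  refine (MemLp.mul_prod (hL2 x₁) (hL2 x₂)).of_le (Measurable.aestronglyMeasurable (by fun_prop))
    (ae_of_all _ fun ξ => ?_)
  rw [norm_mul]
  exact norm_mul_div_min_rpow_mul_max_rpow_le (fun h => by simp [h]) (fun h => by simp [h])
    (by nlinarith) (by ring)
end

section
/- Let s ∈ (0,1), α ∈ [0,1], and let f : ℝ² → ℝ satisfy: there is c > 0 such that the rectangular increment Δf_{(h₁,h₂)}(x₁,x₂) = f(x₁+h₁,x₂+h₂) − f(x₁,x₂+h₂) − f(x₁+h₁,x₂) + f(x₁,x₂) satisfies |Δf_{(h₁,h₂)}(x₁,x₂)| ≤ c · min(|h₁|,|h₂|)^{(1+α)s} · max(|h₁|,|h₂|)^{(1−α)s} for all x₁,x₂,h₁,h₂. Let ψ : ℝ → ℝ be integrable with ∫ψ = 0 and with ∫ max(1,|y₁|,|y₂|)^{(1−α)s}·|y₁|^{(1+α)s}·|ψ(y₁)ψ(y₂)| dy₁dy₂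 < ∞. Then for all integers j₁ ≥ j₂ ≥ 0 and k₁,k₂ ∈ ℤ, the coefficient c_{j₁,j₂,k₁,k₂} = 2^{j₁+j₂}∫_{ℝ²} f(x₁,x₂) ψ(2^{j₁}x₁−k₁)ψ(2^{j₂}x₂−k₂) dx satisfies |c_{j₁,j₂,k₁,k₂}| ≤ C · 2^{−(j₁(1+α)+j₂(1−α))s} for a constant C depending only on c, s, α, ψ. -/
/-!
Put `p = (1 + α) s`, `q = (1 - α) s`, `A = 2^j₁ ≥ B = 2^j₂` and `P(x) = ψ(A x₁ - k₁) ψ(B x₂ - k₂)`.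
Both factors of `P` have mean zero, so `f` may be replaced in `∫ f P` by its rectangular increment
from the corner `a = (k₁ / A, k₂ / B)` to `x`: each of the three correction terms is a product of
one-dimensional integrals, one of which vanishes. In the variables `y = (A x₁ - k₁, B x₂ - k₂)` the
rectangle has sides `y₁ / A` and `y₂ / B`, so the hypothesis on `f` bounds the increment by
`A^{-p} B^{-q} max(|y₁|, |y₂|)^q |y₁|^p`: bound the min by its first argument and, as `A ≥ B`, the
max by `max(|y₁|, |y₂|) / B`. The affine change of variables then produces a factor `(AB)⁻¹` which
cancels the normalisation `2^{j₁+j₂} = AB`, leaving the weighted moment integral of `ψ ⊗ ψ`.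
-/

open MeasureTheory Real
open scoped ENNReal

section ChangeOfVariables

variable {α β E : Type*} [MeasurableSpace α] [MeasurableSpace β]
  [NormedAddCommGroup E] {μ : Measure α} {ν : Measure β}
  {T : α → β} {r : ℝ≥0∞}

theorem integrable_comp_of_map_eq_smul (hT : Measurable T) (hr : r ≠ ∞)
    (hmap : μ.map T = r • ν) {g : β → E} (hg : Integrable g ν) :
    Integrable (fun x => g (T x)) μ := by
  have hgm : AEStronglyMeasurable g (μ.map T) := by
    rw [hmap]; exact hg.1.mono_ac Measure.smul_absolutelyContinuous
  refine (integrable_map_measure hgm hT.aemeasurable).mp ?_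
  rw [hmap]; exact hg.smul_measure hr

theorem integral_comp_of_map_eq_smul [NormedSpace ℝ E] (hT : Measurable T) (hmap : μ.map T = r • ν)
    {g : β → E} (hg : AEStronglyMeasurable g ν) :
    ∫ x, g (T x) ∂μ = r.toReal • ∫ y, g y ∂ν := by
  have hgm : AEStronglyMeasurable g (μ.map T) := by
    rw [hmap]; exact hg.mono_ac Measure.smul_absolutelyContinuous
  rw [← integral_map hT.aemeasurable hgm, hmap, integral_smul_measure]

end ChangeOfVariables

theorem Real.map_volume_mul_sub {a : ℝ} (ha : a ≠ 0) (b : ℝ) :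
    volume.map (fun x : ℝ => a * x - b) = ENNReal.ofReal |a⁻¹| • volume := by
  have hcomp : (fun x : ℝ => a * x - b) = (fun x => x + -b) ∘ (fun x => a * x) := by
    funext x; simp [sub_eq_add_neg]
  rw [hcomp, ← Measure.map_map (measurable_add_const _) (measurable_const_mul a),
    Real.map_volume_mul_left ha, Measure.map_smul, map_add_right_eq_self]

theorem Real.map_volume_prodMap_mul_sub {a a' : ℝ} (ha : a ≠ 0) (ha' : a' ≠ 0) (b b' : ℝ) :
    volume.map (fun x : ℝ × ℝ => (a * x.1 - b, a' * x.2 - b')) =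
      ENNReal.ofReal |(a * a')⁻¹| • volume := by
  change volume.map (Prod.map (fun x => a * x - b) (fun x => a' * x - b')) = _
  rw [Measure.volume_eq_prod,
    ← Measure.map_prod_map _ _ ((measurable_const_mul a).sub_const b)
      ((measurable_const_mul a').sub_const b'),
    map_volume_mul_sub ha, map_volume_mul_sub ha', Measure.prod_smul_left,
    Measure.prod_smul_right, smul_smul, ← ENNReal.ofReal_mul (abs_nonneg _), ← abs_mul,
    ← mul_inv]

theorem integral_comp_mul_sub_eq_zero {ψ : ℝ → ℝ} (hψ : ∫ t, ψ t = 0) (a b : ℝ) :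
    ∫ x, ψ (a * x - b) = 0 := by
  rw [Measure.integral_comp_mul_left (fun y => ψ (y - b)), integral_sub_right_eq_self, hψ,
    smul_zero]

def rectIncrement {α β E : Type*} [AddCommGroup E] (f : α × β → E) (a x : α × β) : E :=
  f x - f (a.1, x.2) - f (x.1, a.2) + f a

section VanishingMeans

variable {α β : Type*} [MeasurableSpace α] [MeasurableSpace β] {μ : Measure α} {ν : Measure β}
  [SigmaFinite μ] [SigmaFinite ν]

theorem integral_mul_prod_eq_integral_rectIncrement_mul {f : α × β → ℝ} (hfm : Measurable f)
    {M : ℝ} (hfM : ∀ x, |f x| ≤ M) {φ₁ : α → ℝ} {φ₂ : β → ℝ}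
    (hφ₁ : Integrable φ₁ μ) (hφ₂ : Integrable φ₂ ν) (hφ₁0 : ∫ t, φ₁ t ∂μ = 0)
    (hφ₂0 : ∫ t, φ₂ t ∂ν = 0) (a : α × β) :
    ∫ x, f x * φ₁ x.1 * φ₂ x.2 ∂μ.prod ν =
      ∫ x, rectIncrement f a x * φ₁ x.1 * φ₂ x.2 ∂μ.prod ν := by
  have hbdd : ∀ y, ‖f y‖ ≤ M := hfM
  have hmain : Integrable (fun x => f x * φ₁ x.1 * φ₂ x.2) (μ.prod ν) := by
    simpa only [mul_assoc] using
      (hφ₁.mul_prod hφ₂).bdd_mul hfm.aestronglyMeasurable (.of_forall fun x => hbdd x)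
  have hslice₂ : Integrable (fun t => f (a.1, t) * φ₂ t) ν :=
    hφ₂.bdd_mul (hfm.comp measurable_prodMk_left).aestronglyMeasurable
      (.of_forall fun t => hbdd _)
  have hslice₁ : Integrable (fun t => f (t, a.2) * φ₁ t) μ :=
    hφ₁.bdd_mul (hfm.comp measurable_prodMk_right).aestronglyMeasurable
      (.of_forall fun t => hbdd _)
  have hsplit : (fun x : α × β => rectIncrement f a x * φ₁ x.1 * φ₂ x.2) = fun x =>
      f x * φ₁ x.1 * φ₂ x.2 - φ₁ x.1 * (f (a.1, x.2) * φ₂ x.2)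
        - f (x.1, a.2) * φ₁ x.1 * φ₂ x.2 + f a * φ₁ x.1 * φ₂ x.2 := by
    funext x; simp only [rectIncrement]; ring
  have h₂ : Integrable (fun x : α × β => φ₁ x.1 * (f (a.1, x.2) * φ₂ x.2)) (μ.prod ν) :=
    hφ₁.mul_prod hslice₂
  have h₃ : Integrable (fun x : α × β => f (x.1, a.2) * φ₁ x.1 * φ₂ x.2) (μ.prod ν) :=
    hslice₁.mul_prod hφ₂
  have h₄ : Integrable (fun x : α × β => f a * φ₁ x.1 * φ₂ x.2) (μ.prod ν) :=
    (hφ₁.const_mul _).mul_prod hφ₂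
  rw [hsplit, integral_add ?_ h₄, integral_sub ?_ h₃, integral_sub hmain h₂,
    integral_prod_mul φ₁ (fun t => f (a.1, t) * φ₂ t),
    integral_prod_mul (fun t => f (t, a.2) * φ₁ t), integral_prod_mul (fun t => f a * φ₁ t),
    integral_const_mul, hφ₁0, hφ₂0]
  · simp
  · exact hmain.sub h₂
  · exact (hmain.sub h₂).sub h₃

end VanishingMeans

theorem min_rpow_mul_max_rpow_div_le {A B p q u v : ℝ} (hp : 0 ≤ p) (hq : 0 ≤ q)
    (hB : 0 < B) (hBA : B ≤ A) (hu : 0 ≤ u) (hv : 0 ≤ v) :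
    min (u / A) (v / B) ^ p * max (u / A) (v / B) ^ q ≤ (u / A) ^ p * (max u v / B) ^ q := by
  have hA : 0 < A := hB.trans_le hBA
  refine mul_le_mul (rpow_le_rpow (by positivity) (min_le_left _ _) hp)
    (rpow_le_rpow (by positivity) (max_le ?_ ?_) hq) (by positivity) (by positivity)
  · exact div_le_div₀ (le_max_of_le_left hu) (le_max_left u v) hB hBA
  · exact div_le_div_of_nonneg_right (le_max_right u v) hB.le

theorem abs_rectIncrement_add_div_le {p q c A B : ℝ} (hp : 0 ≤ p) (hq : 0 ≤ q) (hc : 0 ≤ c)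
    {f : ℝ × ℝ → ℝ}
    (hf : ∀ x₁ x₂ h₁ h₂ : ℝ,
      |f (x₁ + h₁, x₂ + h₂) - f (x₁, x₂ + h₂) - f (x₁ + h₁, x₂) + f (x₁, x₂)|
        ≤ c * min |h₁| |h₂| ^ p * max |h₁| |h₂| ^ q)
    (hB : 0 < B) (hBA : B ≤ A) (a y : ℝ × ℝ) :
    |rectIncrement f a (a.1 + y.1 / A, a.2 + y.2 / B)| ≤
      c * (A ^ p)⁻¹ * (B ^ q)⁻¹ * (max 1 (max |y.1| |y.2|) ^ q * |y.1| ^ p) := by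
  have hA : 0 < A := hB.trans_le hBA
  calc |rectIncrement f a (a.1 + y.1 / A, a.2 + y.2 / B)|
      ≤ c * (min (|y.1| / A) (|y.2| / B) ^ p * max (|y.1| / A) (|y.2| / B) ^ q) := by
        have := hf a.1 a.2 (y.1 / A) (y.2 / B)
        rw [abs_div, abs_div, abs_of_pos hA, abs_of_pos hB, mul_assoc] at this
        exact this
    _ ≤ c * ((|y.1| / A) ^ p * (max |y.1| |y.2| / B) ^ q) :=
        mul_le_mul_of_nonneg_left
          (min_rpow_mul_max_rpow_div_le hp hq hB hBA (abs_nonneg _) (abs_nonneg _)) hc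
    _ ≤ c * ((|y.1| / A) ^ p * (max 1 (max |y.1| |y.2|) / B) ^ q) := by
        gcongr c * (_ * (?_ / B) ^ q)
        exact le_max_right _ _
    _ = c * (A ^ p)⁻¹ * (B ^ q)⁻¹ * (max 1 (max |y.1| |y.2|) ^ q * |y.1| ^ p) := by
        rw [div_rpow (abs_nonneg _) hA.le, div_rpow (by positivity) hB.le]
        ring

theorem abs_mul_integral_mul_comp_mul_sub_le {p q c M : ℝ} (hp : 0 ≤ p) (hq : 0 ≤ q)
    (hc : 0 ≤ c) {f : ℝ × ℝ → ℝ} (hfm : Measurable f) (hfM : ∀ x, |f x| ≤ M)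
    (hf : ∀ x₁ x₂ h₁ h₂ : ℝ,
      |f (x₁ + h₁, x₂ + h₂) - f (x₁, x₂ + h₂) - f (x₁ + h₁, x₂) + f (x₁, x₂)|
        ≤ c * min |h₁| |h₂| ^ p * max |h₁| |h₂| ^ q)
    {ψ : ℝ → ℝ} (hψ : Integrable ψ) (hψ0 : ∫ t, ψ t = 0)
    (hψmom : Integrable (fun y : ℝ × ℝ =>
      max 1 (max |y.1| |y.2|) ^ q * |y.1| ^ p * |ψ y.1 * ψ y.2|))
    {A B : ℝ} (hB : 0 < B) (hBA : B ≤ A) (b₁ b₂ : ℝ) :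
    |A * B * ∫ x : ℝ × ℝ, f x * ψ (A * x.1 - b₁) * ψ (B * x.2 - b₂)| ≤
      c * (∫ y : ℝ × ℝ, max 1 (max |y.1| |y.2|) ^ q * |y.1| ^ p * |ψ y.1 * ψ y.2|) *
        ((A ^ p)⁻¹ * (B ^ q)⁻¹) := by
  have hA : 0 < A := hB.trans_le hBA
  set G : ℝ × ℝ → ℝ := fun y => max 1 (max |y.1| |y.2|) ^ q * |y.1| ^ p * |ψ y.1 * ψ y.2|
  set T : ℝ × ℝ → ℝ × ℝ := fun x => (A * x.1 - b₁, B * x.2 - b₂)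
  have hTm : Measurable T :=
    ((measurable_fst.const_mul A).sub_const b₁).prodMk
      ((measurable_snd.const_mul B).sub_const b₂)
  set a : ℝ × ℝ := (b₁ / A, b₂ / B)
  have hpoint : ∀ x, ‖rectIncrement f a x * ψ (T x).1 * ψ (T x).2‖ ≤
      c * (A ^ p)⁻¹ * (B ^ q)⁻¹ * G (T x) := by
    intro x
    have hx : (a.1 + (T x).1 / A, a.2 + (T x).2 / B) = x := by
      ext <;> simp only [T, a] <;> field_simp <;> ring
    have hincr := abs_rectIncrement_add_div_le hp hq hc hf hB hBA a (T x)
    rw [hx] at hincr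
    rw [Real.norm_eq_abs, mul_assoc, abs_mul]
    calc |rectIncrement f a x| * |ψ (T x).1 * ψ (T x).2|
        ≤ c * (A ^ p)⁻¹ * (B ^ q)⁻¹ * (max 1 (max |(T x).1| |(T x).2|) ^ q * |(T x).1| ^ p) *
            |ψ (T x).1 * ψ (T x).2| := by gcongr
      _ = c * (A ^ p)⁻¹ * (B ^ q)⁻¹ * G (T x) := by simp only [G]; ring
  rw [Measure.volume_eq_prod, integral_mul_prod_eq_integral_rectIncrement_mul hfm hfM
    ((hψ.comp_sub_right b₁).comp_mul_left' hA.ne') ((hψ.comp_sub_right b₂).comp_mul_left' hB.ne')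
    (integral_comp_mul_sub_eq_zero hψ0 A b₁) (integral_comp_mul_sub_eq_zero hψ0 B b₂) a,
    ← Measure.volume_eq_prod, abs_mul, abs_of_pos (by positivity), ← Real.norm_eq_abs]
  calc A * B * ‖∫ x, rectIncrement f a x * ψ (A * x.1 - b₁) * ψ (B * x.2 - b₂)‖
      ≤ A * B * ∫ x, c * (A ^ p)⁻¹ * (B ^ q)⁻¹ * G (T x) := by
        gcongr
        exact norm_integral_le_of_norm_le
          ((integrable_comp_of_map_eq_smul hTm ENNReal.ofReal_ne_top
            (map_volume_prodMap_mul_sub hA.ne' hB.ne' b₁ b₂) hψmom).const_mul _)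
          (.of_forall hpoint)
    _ = A * B * (c * (A ^ p)⁻¹ * (B ^ q)⁻¹ * (|(A * B)⁻¹| * ∫ y, G y)) := by
        rw [integral_const_mul, integral_comp_of_map_eq_smul hTm
          (map_volume_prodMap_mul_sub hA.ne' hB.ne' b₁ b₂) hψmom.1,
          ENNReal.toReal_ofReal (abs_nonneg _), smul_eq_mul]
    _ = c * (∫ y, G y) * ((A ^ p)⁻¹ * (B ^ q)⁻¹) := by
        rw [abs_of_pos (by positivity)]
        field_simp

theorem wavelet_coefficient_decay
    (s α : ℝ) (hs : s ∈ Set.Ioo (0:ℝ) 1) (hα : α ∈ Set.Icc (0:ℝ) 1)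
    (f : ℝ × ℝ → ℝ) (hfm : Measurable f) (M : ℝ) (hfM : ∀ x, |f x| ≤ M)
    (c : ℝ) (hc : 0 < c)
    (hf : ∀ x₁ x₂ h₁ h₂ : ℝ,
      |f (x₁ + h₁, x₂ + h₂) - f (x₁, x₂ + h₂) - f (x₁ + h₁, x₂) + f (x₁, x₂)|
        ≤ c * min |h₁| |h₂| ^ ((1 + α) * s) * max |h₁| |h₂| ^ ((1 - α) * s))
    (ψ : ℝ → ℝ) (hψint : Integrable ψ) (hψ0 : ∫ t, ψ t = 0)
    (hψmom : Integrable (fun y : ℝ × ℝ =>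
      max 1 (max |y.1| |y.2|) ^ ((1 - α) * s) * |y.1| ^ ((1 + α) * s) * |ψ y.1 * ψ y.2|)) :
    ∃ C > 0, ∀ (j₁ j₂ : ℕ), j₂ ≤ j₁ → ∀ k₁ k₂ : ℤ,
      |(2:ℝ) ^ (j₁ + j₂) *
          ∫ x : ℝ × ℝ, f x * ψ (2 ^ j₁ * x.1 - k₁) * ψ (2 ^ j₂ * x.2 - k₂)|
        ≤ C * (2:ℝ) ^ (-(((j₁:ℝ) * (1 + α) + (j₂:ℝ) * (1 - α)) * s)) := by
  obtain ⟨hs0, -⟩ := hs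
  obtain ⟨hα0, hα1⟩ := hα
  have hp : 0 ≤ (1 + α) * s := mul_nonneg (by linarith) hs0.le
  have hq : 0 ≤ (1 - α) * s := mul_nonneg (by linarith) hs0.le
  set K := ∫ y : ℝ × ℝ,
    max 1 (max |y.1| |y.2|) ^ ((1 - α) * s) * |y.1| ^ ((1 + α) * s) * |ψ y.1 * ψ y.2|
  have hK : 0 ≤ K := integral_nonneg fun y => by positivity
  refine ⟨c * K + 1, by positivity, fun j₁ j₂ hj k₁ k₂ => ?_⟩
  have hscale : (((2:ℝ) ^ j₁) ^ ((1 + α) * s))⁻¹ * ((2 ^ j₂) ^ ((1 - α) * s))⁻¹ =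
      (2:ℝ) ^ (-(((j₁:ℝ) * (1 + α) + (j₂:ℝ) * (1 - α)) * s)) := by
    rw [← rpow_natCast, ← rpow_natCast, ← rpow_mul zero_le_two, ← rpow_mul zero_le_two,
      ← rpow_neg zero_le_two, ← rpow_neg zero_le_two, ← rpow_add two_pos]
    ring_nf
  rw [pow_add, ← hscale]
  refine (abs_mul_integral_mul_comp_mul_sub_le hp hq hc.le hfm hfM hf hψint hψ0 hψmom
    (by positivity) (pow_le_pow_right₀ one_le_two hj) _ _).trans ?_
  gcongr
  linarith
end
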